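/- Under the stated setting, assume conditions (3.3), (3.4), (3.5) hold for constants M, R, K, ω, δ > 0. Then there exists r̃ > 0 such that: for every T ∈ (0, r̃], every measurable d : [0,T] → D, and every absolutely continuous (x,y) : [0,T] → ℝⁿ×ℝ with x(0)'Px(0) < R² satisfying, for almost every t ∈ [0,T], ẋ(t) = Ax(t) + f(d(t),x(t),u₀) + b·u₀ and ẏ(t) = xₙ(t) + g(d(t),x(t),u₀) with the constant input u₀ = p'x(0) − Kc'b·sat(ω(y(0) + c'x(0))), it holds that x(t)'Px(t) < R² for all t ∈ [0,T]. -/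

import Mathlib

/-
On the compact set `x'Px ≤ R²` the vector field `Ax + f(d,x,u) + bu` is bounded, say by `L`, so
along a trajectory that has not left this set the input `u₀` stays within
`K|c'b| + ‖p‖ L T` of `p'x(t)`. Since the inequality (3.3) is strict and the data range over a
compact set, it persists on a shell `R² - η ≤ x'Px ≤ R²` for inputs with
`|u - p'x| ≤ K|c'b| + η`. Take `T` with `‖p‖ L T ≤ η`. If `x'Px` reached `R²`, then just before the
first such time `t₁` the trajectory lies in that shell, where `(x'Px)' = 2 x'Pẋ < 0` almost
everywhere; as `t ↦ x(t)'Px(t)` is Lipschitz, hence absolutely continuous, it decreases there,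
which contradicts `x(t)'Px(t) < R²` for `t < t₁`.
-/

open Matrix MeasureTheory Set Filter

noncomputable section

/-- The `m × m` matrix with ones on the subdiagonal and zeros elsewhere. -/
def matA (m : ℕ) : Matrix (Fin m) (Fin m) ℝ :=
  Matrix.of fun i j => if (i : ℕ) = (j : ℕ) + 1 then 1 else 0

/-- The vector `b = (1,0,…,0)'` as a plain function. -/
def vecbf (m : ℕ) : Fin m → ℝ := fun i => if (i : ℕ) = 0 then 1 else 0

/-- The vector `b = (1,0,…,0)'` in Euclidean space. -/
def vecb (m : ℕ) : EuclideanSpace ℝ (Fin m) := (WithLp.equiv 2 (Fin m → ℝ)).symm (vecbf m)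

/-- View a Euclidean vector as a plain function. -/
def ef {m : ℕ} (x : EuclideanSpace ℝ (Fin m)) : Fin m → ℝ := x

/-- Matrix-vector multiplication on Euclidean space. -/
def mulVecE {m : ℕ} (M : Matrix (Fin m) (Fin m) ℝ) (x : EuclideanSpace ℝ (Fin m)) :
    EuclideanSpace ℝ (Fin m) :=
  (WithLp.equiv 2 (Fin m → ℝ)).symm (M.mulVec (ef x))

/-- Euclidean inner product `x'y`. -/
def ip {m : ℕ} (x y : EuclideanSpace ℝ (Fin m)) : ℝ := ∑ i, x i * y i

/-- Quadratic form `x'Px`. -/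
def qf {m : ℕ} (P : Matrix (Fin m) (Fin m) ℝ) (x : EuclideanSpace ℝ (Fin m)) : ℝ :=
  ip x (mulVecE P x)

/-- The saturation function `sat(s) = s / max(1,|s|)`. -/
def sat (s : ℝ) : ℝ := s / max 1 |s|

/-- The vector `c = -(A' + pb')⁻¹ (0,…,0,1)'`. -/
def cvec (n : ℕ) (p : EuclideanSpace ℝ (Fin (n+1))) : EuclideanSpace ℝ (Fin (n+1)) :=
  (WithLp.equiv 2 (Fin (n+1) → ℝ)).symm
    (-((((matA (n+1))ᵀ + vecMulVec (ef p) (vecbf (n+1)))⁻¹).mulVec (Pi.single (Fin.last n) 1)))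

/-- Condition (3.3): `x'P(Ax + f(d,x,u) + bu) < 0` whenever `d ∈ D`, `x'Px = R²` and
`|u - p'x| ≤ K|c'b|`. -/
def Cond33 {l n : ℕ} (D : Set (EuclideanSpace ℝ (Fin l)))
    (f : EuclideanSpace ℝ (Fin l) → EuclideanSpace ℝ (Fin (n+1)) → ℝ → EuclideanSpace ℝ (Fin (n+1)))
    (P : Matrix (Fin (n+1)) (Fin (n+1)) ℝ) (p : EuclideanSpace ℝ (Fin (n+1))) (R K : ℝ) : Prop :=
  ∀ d ∈ D, ∀ x : EuclideanSpace ℝ (Fin (n+1)), ∀ u : ℝ,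
    qf P x = R ^ 2 → |u - ip p x| ≤ K * |ip (cvec n p) (vecb (n+1))| →
      ip x (mulVecE P (mulVecE (matA (n+1)) x + f d x u + u • vecb (n+1))) < 0

/-- Condition (3.4): `|g(d,x,u) + c'f(d,x,u)| < K(c'b)²` whenever `d ∈ D`, `x'Px ≤ R²` and
`|u - p'x| ≤ K|c'b|`. -/
def Cond34 {l n : ℕ} (D : Set (EuclideanSpace ℝ (Fin l)))
    (f : EuclideanSpace ℝ (Fin l) → EuclideanSpace ℝ (Fin (n+1)) → ℝ → EuclideanSpace ℝ (Fin (n+1)))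
    (g : EuclideanSpace ℝ (Fin l) → EuclideanSpace ℝ (Fin (n+1)) → ℝ → ℝ)
    (P : Matrix (Fin (n+1)) (Fin (n+1)) ℝ) (p : EuclideanSpace ℝ (Fin (n+1))) (R K : ℝ) : Prop :=
  ∀ d ∈ D, ∀ x : EuclideanSpace ℝ (Fin (n+1)), ∀ u : ℝ,
    qf P x ≤ R ^ 2 → |u - ip p x| ≤ K * |ip (cvec n p) (vecb (n+1))| →
      |g d x u + ip (cvec n p) (f d x u)| < K * (ip (cvec n p) (vecb (n+1))) ^ 2

/-- Condition (3.5). -/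
def Cond35 {l n : ℕ} (D : Set (EuclideanSpace ℝ (Fin l)))
    (f : EuclideanSpace ℝ (Fin l) → EuclideanSpace ℝ (Fin (n+1)) → ℝ → EuclideanSpace ℝ (Fin (n+1)))
    (g : EuclideanSpace ℝ (Fin l) → EuclideanSpace ℝ (Fin (n+1)) → ℝ → ℝ)
    (P : Matrix (Fin (n+1)) (Fin (n+1)) ℝ) (p : EuclideanSpace ℝ (Fin (n+1)))
    (M R K ω δ : ℝ) : Prop :=
  ∀ d ∈ D, ∀ x : EuclideanSpace ℝ (Fin (n+1)), ∀ z : ℝ,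
    qf P x ≤ R ^ 2 → ω * |z| ≤ 1 →
      ∀ u : ℝ, u = ip p x - K * ip (cvec n p) (vecb (n+1)) * ω * z →
        z * (M * g d x u + M * ip (cvec n p) (f d x u)
              - K * ip (cvec n p) (vecb (n+1)) * ω * ip (vecb (n+1)) (mulVecE P x))
          ≤ (M * K * (ip (cvec n p) (vecb (n+1))) ^ 2 * ω - δ) * z ^ 2
            - ip x (mulVecE P
                (mulVecE (matA (n+1) + vecMulVec (vecbf (n+1)) (ef p) + δ • 1) x + f d x u))

open Topology

section QuadraticForm

variable {m : ℕ}

lemma ip_eq_inner (x y : EuclideanSpace ℝ (Fin m)) : ip x y = inner ℝ x y := by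
  simp [ip, PiLp.inner_apply, mul_comm]

lemma qf_eq_inner (P : Matrix (Fin m) (Fin m) ℝ) (x : EuclideanSpace ℝ (Fin m)) :
    qf P x = inner ℝ x (toEuclideanCLM (𝕜 := ℝ) P x) :=
  ip_eq_inner _ _

lemma abs_ip_sub_ip_le (p x y : EuclideanSpace ℝ (Fin m)) :
    |ip p x - ip p y| ≤ ‖p‖ * ‖x - y‖ := by
  rw [ip_eq_inner, ip_eq_inner, ← inner_sub_right]
  exact abs_real_inner_le_norm _ _

lemma contDiff_qf (P : Matrix (Fin m) (Fin m) ℝ) : ContDiff ℝ 1 (qf P) := by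
  simp_rw [funext (qf_eq_inner P)]
  exact contDiff_id.inner ℝ (toEuclideanCLM (𝕜 := ℝ) P).contDiff

@[fun_prop]
lemma continuous_qf (P : Matrix (Fin m) (Fin m) ℝ) : Continuous (qf P) :=
  (contDiff_qf P).continuous

@[fun_prop]
lemma continuous_ip_left (p : EuclideanSpace ℝ (Fin m)) : Continuous (ip p) := by
  simp_rw [funext (ip_eq_inner p)]
  exact continuous_const.inner continuous_id

@[fun_prop]
lemma continuous_mulVecE (P : Matrix (Fin m) (Fin m) ℝ) : Continuous (mulVecE P) :=
  (toEuclideanCLM (𝕜 := ℝ) P).continuous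

lemma qf_smul (P : Matrix (Fin m) (Fin m) ℝ) (c : ℝ) (x : EuclideanSpace ℝ (Fin m)) :
    qf P (c • x) = c ^ 2 * qf P x := by
  simp only [qf_eq_inner, map_smul, inner_smul_left, inner_smul_right, RCLike.conj_to_real]
  ring

lemma Matrix.PosDef.qf_pos {P : Matrix (Fin m) (Fin m) ℝ} (hP : P.PosDef)
    {x : EuclideanSpace ℝ (Fin m)} (hx : x ≠ 0) : 0 < qf P x := by
  have := hP.dotProduct_mulVec_pos (x := ef x) fun h => hx (by ext i; exact congrFun h i)
  simpa [dotProduct, qf, ip, mulVecE, ef, mul_comm] using this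

lemma qf_zero (P : Matrix (Fin m) (Fin m) ℝ) : qf P 0 = 0 := by
  simp [qf_eq_inner]

lemma Matrix.PosDef.exists_pos_mul_sq_norm_le_qf {P : Matrix (Fin m) (Fin m) ℝ} (hP : P.PosDef) :
    ∃ μ > 0, ∀ x, μ * ‖x‖ ^ 2 ≤ qf P x := by
  have unit_mem : ∀ x : EuclideanSpace ℝ (Fin m), x ≠ 0 → ‖x‖⁻¹ • x ∈ Metric.sphere 0 1 :=
    fun x hx => by simp [norm_smul, inv_mul_cancel₀ (norm_ne_zero_iff.mpr hx)]
  rcases (Metric.sphere (0 : EuclideanSpace ℝ (Fin m)) 1).eq_empty_or_nonempty with hs | hs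
  · refine ⟨1, one_pos, fun x => ?_⟩
    obtain rfl : x = 0 := by_contra fun hx => hs.subset (unit_mem x hx)
    simp [qf_zero]
  obtain ⟨e, he, hmin⟩ :=
    (isCompact_sphere _ _).exists_isMinOn hs (continuous_qf P).continuousOn
  refine ⟨qf P e, hP.qf_pos (by rintro rfl; simp at he), fun x => ?_⟩
  rcases eq_or_ne x 0 with rfl | hx
  · simp [qf_zero]
  have hmin_x := hmin (unit_mem x hx)
  rw [Set.mem_ofPred_eq, qf_smul, inv_pow, ← div_eq_inv_mul,
    le_div_iff₀ (by positivity)] at hmin_x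
  exact hmin_x

lemma Matrix.PosDef.isCompact_qf_le {P : Matrix (Fin m) (Fin m) ℝ} (hP : P.PosDef) (r : ℝ) :
    IsCompact {x | qf P x ≤ r} := by
  obtain ⟨μ, hμ, hle⟩ := hP.exists_pos_mul_sq_norm_le_qf
  refine (isCompact_closedBall 0 √(r / μ)).of_isClosed_subset
    (isClosed_le (continuous_qf P) continuous_const) fun x hx => ?_
  rw [mem_closedBall_zero_iff]
  exact Real.le_sqrt_of_sq_le ((le_div_iff₀' hμ).mpr ((hle x).trans hx))

lemma Matrix.PosDef.exists_abs_ip_le {P : Matrix (Fin m) (Fin m) ℝ} (hP : P.PosDef)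
    (p : EuclideanSpace ℝ (Fin m)) (r : ℝ) : ∃ c, ∀ x, qf P x ≤ r → |ip p x| ≤ c :=
  (hP.isCompact_qf_le r).exists_bound_of_continuousOn (continuous_ip_left p).continuousOn

lemma Matrix.IsHermitian.hasDerivAt_qf {P : Matrix (Fin m) (Fin m) ℝ} (hP : P.IsHermitian)
    {x : ℝ → EuclideanSpace ℝ (Fin m)} {v : EuclideanSpace ℝ (Fin m)} {t : ℝ}
    (hx : HasDerivAt x v t) :
    HasDerivAt (fun s => qf P (x s)) (2 * ip (x t) (mulVecE P v)) t := by
  have hsymm : ∀ y z, inner ℝ (toEuclideanCLM (𝕜 := ℝ) P y) z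
      = inner ℝ y (toEuclideanCLM (𝕜 := ℝ) P z) :=
    Matrix.isSymmetric_toEuclideanLin_iff.mpr hP
  have h := hx.inner ℝ ((toEuclideanCLM (𝕜 := ℝ) P).hasFDerivAt.comp_hasDerivAt t hx)
  have hval : inner ℝ (x t) (toEuclideanCLM (𝕜 := ℝ) P v)
      + inner ℝ v (toEuclideanCLM (𝕜 := ℝ) P (x t)) = 2 * ip (x t) (mulVecE P v) := by
    rw [ip_eq_inner, two_mul, ← hsymm v (x t), real_inner_comm (x t)]
    rfl
  simpa only [qf_eq_inner, Function.comp_def, hval] using h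

end QuadraticForm

lemma ContinuousOn.exists_first_eq {W : ℝ → ℝ} {a b c t : ℝ} (hW : ContinuousOn W (Icc a b))
    (ha : W a < c) (ht : t ∈ Icc a b) (hct : c ≤ W t) :
    ∃ t₁ ∈ Ioc a t, W t₁ = c ∧ ∀ s ∈ Ico a t₁, W s < c := by
  set H := Icc a t ∩ W ⁻¹' Ici c
  have hH : IsClosed H :=
    (hW.mono (Icc_subset_Icc_right ht.2)).preimage_isClosed_of_isClosed isClosed_Icc isClosed_Ici
  have hbdd : BddBelow H := ⟨a, fun s hs => hs.1.1⟩
  have ht₁ : sInf H ∈ H := hH.csInf_mem ⟨t, ⟨ht.1, le_rfl⟩, hct⟩ hbdd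
  have hbefore : ∀ s ∈ Ico a (sInf H), W s < c := fun s hs => by
    by_contra! hcs
    exact (csInf_le hbdd ⟨⟨hs.1, hs.2.le.trans ht₁.1.2⟩, hcs⟩).not_gt hs.2
  have hat₁ : a < sInf H := ht₁.1.1.lt_of_ne fun h => (h ▸ ha).not_ge ht₁.2
  obtain ⟨s, hs, hWs⟩ := intermediate_value_Icc ht₁.1.1
    (hW.mono (Icc_subset_Icc_right (ht₁.1.2.trans ht.2)))
    (show c ∈ Icc (W a) (W (sInf H)) from ⟨ha.le, ht₁.2⟩)
  have hs_eq : s = sInf H := hs.2.eq_of_not_lt fun h => (hbefore s ⟨hs.1, h⟩).ne hWs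
  exact ⟨sInf H, ⟨hat₁, ht₁.1.2⟩, hs_eq ▸ hWs, hbefore⟩

lemma IsCompact.exists_pos_forall_le_imp_neg {X : Type*} [TopologicalSpace X] {C : Set X}
    (hC : IsCompact C) {φ F : X → ℝ} (hφ : Continuous φ) (hF : Continuous F)
    (h : ∀ q ∈ C, φ q ≤ 0 → F q < 0) : ∃ η > 0, ∀ q ∈ C, φ q ≤ η → F q < 0 := by
  set C' := C ∩ {q | 0 ≤ F q}
  have hC' : IsCompact C' := hC.inter_right (isClosed_le continuous_const hF)
  rcases C'.eq_empty_or_nonempty with hempty | hne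
  · refine ⟨1, one_pos, fun q hq _ => ?_⟩
    by_contra! hFq
    exact hempty.subset ⟨hq, hFq⟩
  obtain ⟨q₀, hq₀, hmin⟩ := hC'.exists_isMinOn hne hφ.continuousOn
  have hφq₀ : 0 < φ q₀ := by
    by_contra! h0
    exact (h q₀ hq₀.1 h0).not_ge hq₀.2
  refine ⟨φ q₀ / 2, half_pos hφq₀, fun q hq hφq => ?_⟩
  by_contra! hFq
  linarith [isMinOn_iff.mp hmin q ⟨hq, hFq⟩]

lemma ContinuousOn.exists_Icc_lt {W : ℝ → ℝ} {a b c : ℝ} (hW : ContinuousOn W (Icc a b))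
    (hab : a < b) (hc : c < W b) : ∃ s ∈ Ico a b, ∀ r ∈ Icc s b, c < W r := by
  have hev : {r | c < W r} ∈ 𝓝[≤] b := by
    rw [← nhdsWithin_Icc_eq_nhdsLE hab]
    exact hW.continuousWithinAt (right_mem_Icc.mpr hab.le) (Ioi_mem_nhds hc)
  obtain ⟨l, hlb, hl⟩ := mem_nhdsLE_iff_exists_Icc_subset.mp hev
  exact ⟨max l a, ⟨le_max_right _ _, max_lt hlb hab⟩,
    fun r hr => hl ⟨(le_max_left _ _).trans hr.1, hr.2⟩⟩

section Primitive

variable {E : Type*} [NormedAddCommGroup E] [NormedSpace ℝ E] {x v : ℝ → E} {a b : ℝ}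

lemma continuousOn_of_eq_add_integral (hv : IntervalIntegrable v volume a b) (hab : a ≤ b)
    (hx : ∀ t ∈ Icc a b, x t = x a + ∫ s in a..t, v s) : ContinuousOn x (Icc a b) := by
  have hprim := intervalIntegral.continuousOn_primitive_interval' hv left_mem_uIcc
  rw [uIcc_of_le hab] at hprim
  exact (continuousOn_const.add hprim).congr hx

lemma lipschitzOnWith_of_eq_add_integral (hv : IntervalIntegrable v volume a b)
    (hx : ∀ t ∈ Icc a b, x t = x a + ∫ s in a..t, v s) {L : ℝ}
    (hL : ∀ᵐ s, s ∈ Icc a b → ‖v s‖ ≤ L) : LipschitzOnWith L.toNNReal x (Icc a b) := by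
  refine LipschitzOnWith.of_dist_le' fun t ht s hs => ?_
  have hsub : ∀ r ∈ Icc a b, uIcc a r ⊆ uIcc a b := fun r hr =>
    uIcc_subset_uIcc_left (Icc_subset_uIcc hr)
  rw [dist_eq_norm, hx t ht, hx s hs, add_sub_add_left_eq_sub,
    intervalIntegral.integral_interval_sub_left (hv.mono_set (hsub t ht))
      (hv.mono_set (hsub s hs)), Real.dist_eq]
  refine intervalIntegral.norm_integral_le_of_norm_le_const_ae ?_
  filter_upwards [hL] with r hr hrst
  exact hr (uIcc_subset_Icc hs ht (uIoc_subset_uIcc hrst))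

lemma ae_hasDerivAt_of_eq_add_integral [CompleteSpace E] (hv : IntervalIntegrable v volume a b)
    (hx : ∀ t ∈ Icc a b, x t = x a + ∫ s in a..t, v s) :
    ∀ᵐ t, t ∈ Ioo a b → HasDerivAt x (v t) t := by
  filter_upwards [hv.ae_hasDerivAt_integral] with t ht hta
  have hab : a ≤ b := hta.1.le.trans hta.2.le
  have hmem : t ∈ uIcc a b := by rw [uIcc_of_le hab]; exact Ioo_subset_Icc_self hta
  exact ((ht hmem a left_mem_uIcc).const_add (x a)).congr_of_eventuallyEq
    (eventually_of_mem (Icc_mem_nhds hta.1 hta.2) hx)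

end Primitive

lemma qf_le_of_ae_deriv_nonpos {m : ℕ} {P : Matrix (Fin m) (Fin m) ℝ} (hP : P.IsHermitian)
    {x v : ℝ → EuclideanSpace ℝ (Fin m)} {a b : ℝ} {K : NNReal} (hab : a ≤ b)
    (hx : LipschitzOnWith K x (Icc a b)) (hder : ∀ᵐ t, t ∈ Ioo a b → HasDerivAt x (v t) t)
    (hneg : ∀ᵐ t, t ∈ Ioo a b → ip (x t) (mulVecE P (v t)) ≤ 0) :
    qf P (x b) ≤ qf P (x a) := by
  obtain ⟨Kq, hKq⟩ := (contDiff_qf P).locallyLipschitz.locallyLipschitzOn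
    |>.exists_lipschitzOnWith_of_compact (isCompact_Icc.image_of_continuousOn hx.continuousOn)
  have hW : AbsolutelyContinuousOnInterval (fun t => qf P (x t)) a b := by
    have hWLip := hKq.comp hx (mapsTo_image x _)
    rw [← uIcc_of_le hab] at hWLip
    exact hWLip.absolutelyContinuousOnInterval
  rw [← sub_nonpos, ← hW.integral_deriv_eq_sub, intervalIntegral.integral_of_le hab,
    integral_Ioc_eq_integral_Ioo]
  refine integral_nonpos_of_ae ((ae_restrict_iff' measurableSet_Ioo).mpr ?_)
  filter_upwards [hder, hneg] with t hdt hnt ht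
  rw [(hP.hasDerivAt_qf (hdt ht)).deriv, Pi.zero_apply]
  linarith [hnt ht]

lemma abs_sub_ip_le_of_lipschitzOnWith {m : ℕ} (p : EuclideanSpace ℝ (Fin m)) (u : ℝ) {L τ s : ℝ}
    {x : ℝ → EuclideanSpace ℝ (Fin m)} (hL : 0 ≤ L) (hx : LipschitzOnWith L.toNNReal x (Icc 0 τ))
    (hs : s ∈ Icc 0 τ) : |u - ip p (x s)| ≤ |u - ip p (x 0)| + ‖p‖ * L * s := by
  have hdist := hx.dist_le_mul s hs 0 ⟨le_rfl, hs.1.trans hs.2⟩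
  rw [Real.coe_toNNReal _ hL, dist_eq_norm, Real.dist_eq, sub_zero, abs_of_nonneg hs.1] at hdist
  calc |u - ip p (x s)| ≤ |u - ip p (x 0)| + |ip p (x s) - ip p (x 0)| := by
        rw [abs_sub_comm (ip p (x s))]; exact abs_sub_le _ _ _
    _ ≤ |u - ip p (x 0)| + ‖p‖ * (L * s) := by
        gcongr; exact (abs_ip_sub_ip_le p _ _).trans (by gcongr)
    _ = |u - ip p (x 0)| + ‖p‖ * L * s := by ring

section Invariance

variable {m : ℕ} {Y : Type*} {D : Set Y}
  {G : Y → EuclideanSpace ℝ (Fin m) → ℝ → EuclideanSpace ℝ (Fin m)} {P : Matrix (Fin m) (Fin m) ℝ}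

lemma exists_norm_le_of_qf_le [TopologicalSpace Y] (hD : IsCompact D)
    (hG : Continuous fun q : Y × EuclideanSpace ℝ (Fin m) × ℝ => G q.1 q.2.1 q.2.2)
    (hP : P.PosDef) (p : EuclideanSpace ℝ (Fin m)) (R κ : ℝ) :
    ∃ L, 0 ≤ L ∧ ∀ d ∈ D, ∀ x y u, qf P x ≤ R ^ 2 → qf P y ≤ R ^ 2 → |u - ip p y| ≤ κ →
      ‖G d x u‖ ≤ L := by
  obtain ⟨c, hc⟩ := hP.exists_abs_ip_le p (R ^ 2)
  obtain ⟨L, hL⟩ := (hD.prod ((hP.isCompact_qf_le (R ^ 2)).prod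
    (isCompact_Icc (a := -(c + κ)) (b := c + κ)))).exists_bound_of_continuousOn hG.continuousOn
  refine ⟨max L 0, le_max_right _ _, fun d hd x y u hx hy hu => le_max_of_le_left ?_⟩
  have hu' : |u| ≤ c + κ := by linarith [abs_sub_abs_le_abs_sub u (ip p y), hc y hy]
  exact hL (d, x, u) ⟨hd, hx, abs_le.mp hu'⟩

lemma exists_margin_of_inward [TopologicalSpace Y] {p : EuclideanSpace ℝ (Fin m)} {R κ : ℝ}
    (hD : IsCompact D)
    (hG : Continuous fun q : Y × EuclideanSpace ℝ (Fin m) × ℝ => G q.1 q.2.1 q.2.2)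
    (hP : P.PosDef) (hinward : ∀ d ∈ D, ∀ x u, qf P x = R ^ 2 → |u - ip p x| ≤ κ →
      ip x (mulVecE P (G d x u)) < 0) :
    ∃ η > 0, ∀ d ∈ D, ∀ x u, R ^ 2 - η ≤ qf P x → qf P x ≤ R ^ 2 → |u - ip p x| ≤ κ + η →
      ip x (mulVecE P (G d x u)) < 0 := by
  obtain ⟨c, hc⟩ := hP.exists_abs_ip_le p (R ^ 2)
  set C := D ×ˢ {x | qf P x ≤ R ^ 2} ×ˢ Icc (-(c + κ + 1)) (c + κ + 1)
  have hC : IsCompact C := hD.prod ((hP.isCompact_qf_le (R ^ 2)).prod isCompact_Icc)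
  have hφ : Continuous fun q : Y × EuclideanSpace ℝ (Fin m) × ℝ =>
      max (R ^ 2 - qf P q.2.1) (|q.2.2 - ip p q.2.1| - κ) := by
    fun_prop
  have hF : Continuous fun q : Y × EuclideanSpace ℝ (Fin m) × ℝ =>
      ip q.2.1 (mulVecE P (G q.1 q.2.1 q.2.2)) := by
    simp only [ip_eq_inner]
    fun_prop
  obtain ⟨η, hη, hmargin⟩ := hC.exists_pos_forall_le_imp_neg hφ hF
    fun ⟨d, x, u⟩ ⟨hd, hx, _⟩ hφq => by
      obtain ⟨hR, hu⟩ := max_le_iff.mp hφq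
      exact hinward d hd x u (le_antisymm hx (by linarith)) (by linarith)
  refine ⟨min η 1, lt_min hη one_pos, fun d hd x u hx₁ hx₂ hu =>
    hmargin (d, x, u) ⟨hd, hx₂, ?_⟩ ?_⟩
  · exact abs_le.mp (by linarith [abs_sub_abs_le_abs_sub u (ip p x), hc x hx₂, min_le_right η 1])
  · exact max_le (by linarith [min_le_left η 1]) (by linarith [min_le_left η 1])

lemma qf_lt_of_bound_of_margin (hP : P.IsHermitian) {p : EuclideanSpace ℝ (Fin m)} {R κ L η T : ℝ}
    (hL : 0 ≤ L) (hη : 0 < η)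
    (hbound : ∀ d ∈ D, ∀ x y u, qf P x ≤ R ^ 2 → qf P y ≤ R ^ 2 → |u - ip p y| ≤ κ →
      ‖G d x u‖ ≤ L)
    (hmargin : ∀ d ∈ D, ∀ x u, R ^ 2 - η ≤ qf P x → qf P x ≤ R ^ 2 → |u - ip p x| ≤ κ + η →
      ip x (mulVecE P (G d x u)) < 0)
    (hT : ‖p‖ * L * T ≤ η) {d : ℝ → Y} (hd : ∀ t ∈ Icc 0 T, d t ∈ D)
    {x x' : ℝ → EuclideanSpace ℝ (Fin m)} (hx' : IntervalIntegrable x' volume 0 T)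
    (hx : ∀ t ∈ Icc 0 T, x t = x 0 + ∫ s in (0:ℝ)..t, x' s) (hx0 : qf P (x 0) < R ^ 2)
    {u₀ : ℝ} (hu₀ : |u₀ - ip p (x 0)| ≤ κ)
    (hode : ∀ᵐ t ∂volume.restrict (Icc 0 T), x' t = G (d t) (x t) u₀) :
    ∀ t ∈ Icc 0 T, qf P (x t) < R ^ 2 := by
  intro t ht
  by_contra! hRt
  have hT₀ : 0 ≤ T := ht.1.trans ht.2
  obtain ⟨t₁, ht₁, hWt₁, hbefore⟩ := ((continuous_qf P).comp_continuousOn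
    (continuousOn_of_eq_add_integral hx' hT₀ hx)).exists_first_eq hx0 ht hRt
  simp only [Function.comp_apply] at hWt₁ hbefore
  have hsub : Icc 0 t₁ ⊆ Icc 0 T := Icc_subset_Icc_right (ht₁.2.trans ht.2)
  have hin : ∀ s ∈ Icc 0 t₁, qf P (x s) ≤ R ^ 2 := fun s hs =>
    hs.2.eq_or_lt.elim (fun h => (h ▸ hWt₁).le) fun h => (hbefore s ⟨hs.1, h⟩).le
  have hode₁ : ∀ᵐ s, s ∈ Icc 0 t₁ → x' s = G (d s) (x s) u₀ := by
    filter_upwards [(ae_restrict_iff' measurableSet_Icc).mp hode] with s hs hs₁ using hs (hsub hs₁)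
  have hx'₁ : IntervalIntegrable x' volume 0 t₁ :=
    hx'.mono_set (by rw [uIcc_of_le ht₁.1.le, uIcc_of_le hT₀]; exact hsub)
  have hx₁ : ∀ s ∈ Icc 0 t₁, x s = x 0 + ∫ r in (0:ℝ)..s, x' r := fun s hs => hx s (hsub hs)
  have hLip : LipschitzOnWith L.toNNReal x (Icc 0 t₁) := by
    refine lipschitzOnWith_of_eq_add_integral hx'₁ hx₁ ?_
    filter_upwards [hode₁] with s hs hs₁
    rw [hs hs₁]
    exact hbound _ (hd s (hsub hs₁)) _ _ _ (hin s hs₁) hx0.le hu₀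
  have hu : ∀ s ∈ Icc 0 t₁, |u₀ - ip p (x s)| ≤ κ + η := fun s hs => by
    have := abs_sub_ip_le_of_lipschitzOnWith p u₀ hL hLip hs
    nlinarith [mul_nonneg (norm_nonneg p) hL, (hsub hs).2]
  obtain ⟨s₀, hs₀, hnear⟩ := ((continuous_qf P).comp_continuousOn hLip.continuousOn).exists_Icc_lt
    ht₁.1 (show R ^ 2 - η < qf P (x t₁) by linarith)
  simp only [Function.comp_apply] at hnear
  have hdecr := qf_le_of_ae_deriv_nonpos hP hs₀.2.le (hLip.mono (Icc_subset_Icc_left hs₀.1))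
    (by filter_upwards [ae_hasDerivAt_of_eq_add_integral hx'₁ hx₁] with s hs hs₁
        using hs (Ioo_subset_Ioo_left hs₀.1 hs₁))
    (by
      filter_upwards [hode₁] with s hs hs₁
      have hs' : s ∈ Icc 0 t₁ := ⟨hs₀.1.trans hs₁.1.le, hs₁.2.le⟩
      rw [hs hs']
      exact (hmargin _ (hd s (hsub hs')) _ _ (hnear s (Ioo_subset_Icc_self hs₁)).le (hin s hs')
        (hu s hs')).le)
  linarith [hbefore s₀ hs₀]

theorem exists_pos_forall_qf_lt [TopologicalSpace Y] {p : EuclideanSpace ℝ (Fin m)} {R κ : ℝ}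
    (hD : IsCompact D)
    (hG : Continuous fun q : Y × EuclideanSpace ℝ (Fin m) × ℝ => G q.1 q.2.1 q.2.2)
    (hP : P.PosDef) (hinward : ∀ d ∈ D, ∀ x u, qf P x = R ^ 2 → |u - ip p x| ≤ κ →
      ip x (mulVecE P (G d x u)) < 0) :
    ∃ rt > 0, ∀ T ≤ rt, ∀ d : ℝ → Y, (∀ t ∈ Icc 0 T, d t ∈ D) →
      ∀ x x' : ℝ → EuclideanSpace ℝ (Fin m), IntervalIntegrable x' volume 0 T →
      (∀ t ∈ Icc 0 T, x t = x 0 + ∫ s in (0:ℝ)..t, x' s) → qf P (x 0) < R ^ 2 →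
      ∀ u₀, |u₀ - ip p (x 0)| ≤ κ →
      (∀ᵐ t ∂volume.restrict (Icc 0 T), x' t = G (d t) (x t) u₀) →
      ∀ t ∈ Icc 0 T, qf P (x t) < R ^ 2 := by
  obtain ⟨L, hL, hbound⟩ := exists_norm_le_of_qf_le hD hG hP p R κ
  obtain ⟨η, hη, hmargin⟩ := exists_margin_of_inward hD hG hP hinward
  refine ⟨η / (‖p‖ * L + 1), by positivity, fun T hT d hd x x' hx' hx hx0 u₀ hu₀ hode =>
    qf_lt_of_bound_of_margin hP.1 hL hη hbound hmargin ?_ hd hx' hx hx0 hu₀ hode⟩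
  have hTη := (le_div_iff₀ (by positivity)).mp hT
  rcases le_or_gt 0 T with hT₀ | hT₀
  · nlinarith
  · nlinarith [mul_nonneg (norm_nonneg p) hL]

end Invariance

lemma abs_sat_le_one (s : ℝ) : |sat s| ≤ 1 := by
  have hpos : (0:ℝ) < max 1 |s| := lt_max_of_lt_left one_pos
  rw [sat, abs_div, abs_of_pos hpos, div_le_one hpos]
  exact le_max_right _ _

theorem lemma_3_2_general (n l : ℕ)
    (D : Set (EuclideanSpace ℝ (Fin l))) (hDc : IsCompact D)
    (f : EuclideanSpace ℝ (Fin l) → EuclideanSpace ℝ (Fin (n+1)) → ℝ → EuclideanSpace ℝ (Fin (n+1)))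
    (g : EuclideanSpace ℝ (Fin l) → EuclideanSpace ℝ (Fin (n+1)) → ℝ → ℝ)
    (hfLip : LocallyLipschitz
      (fun q : EuclideanSpace ℝ (Fin l) × EuclideanSpace ℝ (Fin (n+1)) × ℝ => f q.1 q.2.1 q.2.2))
    (P : Matrix (Fin (n+1)) (Fin (n+1)) ℝ) (hP : P.PosDef)
    (p : EuclideanSpace ℝ (Fin (n+1)))
    (R K ω : ℝ) (hK : 0 < K)
    (h33 : Cond33 D f P p R K) :
    ∃ rt : ℝ, 0 < rt ∧
      ∀ T : ℝ, 0 < T → T ≤ rt →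
      ∀ d : ℝ → EuclideanSpace ℝ (Fin l), Measurable d → (∀ t ∈ Icc (0:ℝ) T, d t ∈ D) →
      ∀ (x : ℝ → EuclideanSpace ℝ (Fin (n+1))) (y : ℝ → ℝ)
        (x' : ℝ → EuclideanSpace ℝ (Fin (n+1))) (y' : ℝ → ℝ),
        IntervalIntegrable x' volume 0 T → IntervalIntegrable y' volume 0 T →
        (∀ t ∈ Icc (0:ℝ) T, x t = x 0 + ∫ s in (0:ℝ)..t, x' s) →
        (∀ t ∈ Icc (0:ℝ) T, y t = y 0 + ∫ s in (0:ℝ)..t, y' s) →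
        qf P (x 0) < R ^ 2 →
        ∀ u0 : ℝ,
          u0 = ip p (x 0)
              - K * ip (cvec n p) (vecb (n+1)) * sat (ω * (y 0 + ip (cvec n p) (x 0))) →
        (∀ᵐ t ∂(volume.restrict (Icc (0:ℝ) T)),
          x' t = mulVecE (matA (n+1)) (x t) + f (d t) (x t) u0 + u0 • vecb (n+1) ∧
          y' t = x t (Fin.last n) + g (d t) (x t) u0) →
        ∀ t ∈ Icc (0:ℝ) T, qf P (x t) < R ^ 2 := by
  have hfc := hfLip.continuous
  obtain ⟨rt, hrt, hinvariant⟩ := exists_pos_forall_qf_lt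
    (G := fun d x u => mulVecE (matA (n+1)) x + f d x u + u • vecb (n+1))
    (κ := K * |ip (cvec n p) (vecb (n+1))|) hDc (by fun_prop) hP h33
  refine ⟨rt, hrt, fun T _ hT d _ hd x y x' y' hx' _ hx _ hx0 u₀ hu₀ hode =>
    hinvariant T hT d hd x x' hx' hx hx0 u₀ ?_ (hode.mono fun t ht => ht.1)⟩
  rw [hu₀, sub_sub_cancel_left, abs_neg, abs_mul, abs_mul, abs_of_pos hK]
  exact mul_le_of_le_one_right (by positivity) (abs_sat_le_one _)

/-- **Lemma 3.2.** Under conditions (3.3)–(3.5), for sufficiently small `r̃ > 0`, any solution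
of (3.7) on one sampling interval `[0,T]` (`T ≤ r̃`) with constant input
`u₀ = p'x(0) - Kc'b·sat(ω(y(0)+c'x(0)))` and `x(0)'Px(0) < R²` satisfies `x(t)'Px(t) < R²`
on `[0,T]`. -/
theorem lemma_3_2 (n l : ℕ)
    (D : Set (EuclideanSpace ℝ (Fin l))) (hD : D.Nonempty) (hDc : IsCompact D)
    (f : EuclideanSpace ℝ (Fin l) → EuclideanSpace ℝ (Fin (n+1)) → ℝ → EuclideanSpace ℝ (Fin (n+1)))
    (g : EuclideanSpace ℝ (Fin l) → EuclideanSpace ℝ (Fin (n+1)) → ℝ → ℝ)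
    (hfLip : LocallyLipschitz
      (fun q : EuclideanSpace ℝ (Fin l) × EuclideanSpace ℝ (Fin (n+1)) × ℝ => f q.1 q.2.1 q.2.2))
    (hgLip : LocallyLipschitz
      (fun q : EuclideanSpace ℝ (Fin l) × EuclideanSpace ℝ (Fin (n+1)) × ℝ => g q.1 q.2.1 q.2.2))
    (hf0 : ∀ d ∈ D, f d 0 0 = 0) (hg0 : ∀ d ∈ D, g d 0 0 = 0)
    (P : Matrix (Fin (n+1)) (Fin (n+1)) ℝ) (hP : P.PosDef)
    (p : EuclideanSpace ℝ (Fin (n+1)))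
    (hneg : (-(P * (matA (n+1) + vecMulVec (vecbf (n+1)) (ef p))
        + ((matA (n+1))ᵀ + vecMulVec (ef p) (vecbf (n+1))) * P)).PosDef)
    (M R K ω δ : ℝ) (hM : 0 < M) (hR : 0 < R) (hK : 0 < K) (hω : 0 < ω) (hδ : 0 < δ)
    (h33 : Cond33 D f P p R K) (h34 : Cond34 D f g P p R K)
    (h35 : Cond35 D f g P p M R K ω δ) :
    ∃ rt : ℝ, 0 < rt ∧
      ∀ T : ℝ, 0 < T → T ≤ rt →
      ∀ d : ℝ → EuclideanSpace ℝ (Fin l), Measurable d → (∀ t ∈ Icc (0:ℝ) T, d t ∈ D) →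
      ∀ (x : ℝ → EuclideanSpace ℝ (Fin (n+1))) (y : ℝ → ℝ)
        (x' : ℝ → EuclideanSpace ℝ (Fin (n+1))) (y' : ℝ → ℝ),
        IntervalIntegrable x' volume 0 T → IntervalIntegrable y' volume 0 T →
        (∀ t ∈ Icc (0:ℝ) T, x t = x 0 + ∫ s in (0:ℝ)..t, x' s) →
        (∀ t ∈ Icc (0:ℝ) T, y t = y 0 + ∫ s in (0:ℝ)..t, y' s) →
        qf P (x 0) < R ^ 2 →
        ∀ u0 : ℝ,
          u0 = ip p (x 0)
              - K * ip (cvec n p) (vecb (n+1)) * sat (ω * (y 0 + ip (cvec n p) (x 0))) →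
        (∀ᵐ t ∂(volume.restrict (Icc (0:ℝ) T)),
          x' t = mulVecE (matA (n+1)) (x t) + f (d t) (x t) u0 + u0 • vecb (n+1) ∧
          y' t = x t (Fin.last n) + g (d t) (x t) u0) →
        ∀ t ∈ Icc (0:ℝ) T, qf P (x t) < R ^ 2 :=
  lemma_3_2_general n l D hDc f g hfLip P hP p R K ω hK h33
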